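/- An inverse sequence of groups that is both semistable and pro-monomorphic is stable. That is, if an inverse sequence (Gₙ, gₙ) is pro-isomorphic to an inverse sequence all of whose bonding homomorphisms are surjective, and also pro-isomorphic to an inverse sequence all of whose bonding homomorphisms are injective, then (Gₙ, gₙ) is pro-isomorphic to a constant inverse sequence. -/

import Mathlib

universe u

/-- Given an inverse sequence of groups `(Gₙ, gₙ)` (with bonding homomorphisms
`gₙ : Gₙ₊₁ →* Gₙ`), the composite bonding homomorphism `Gₙ →* Gₘ` for `m ≤ n`,
i.e. `gₘ ∘ gₘ₊₁ ∘ ⋯ ∘ gₙ₋₁` (the identity when `m = n`). -/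
def bondingComp {G : ℕ → Type*} [∀ n, Group (G n)] (g : ∀ n, G (n + 1) →* G n)
    (m n : ℕ) (h : m ≤ n) : G n →* G m :=
  Nat.leRecOn h (fun {k} ih => ih.comp (g k)) (MonoidHom.id (G m))

/-- Two inverse sequences of groups are *pro-isomorphic* if there exist
strictly increasing `i j : ℕ → ℕ` and homomorphisms `dₖ : B (j k) →* A (i k)`
and `uₖ : A (i (k+1)) →* B (j k)` such that `dₖ ∘ uₖ` is the composite bonding
homomorphism `A (i (k+1)) →* A (i k)` and `uₖ ∘ dₖ₊₁` is the composite bonding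
homomorphism `B (j (k+1)) →* B (j k)`. -/
def ProIsomorphic (A : ℕ → Type*) [∀ n, Group (A n)] (a : ∀ n, A (n + 1) →* A n)
    (B : ℕ → Type*) [∀ n, Group (B n)] (b : ∀ n, B (n + 1) →* B n) : Prop :=
  ∃ (i j : ℕ → ℕ) (hi : StrictMono i) (hj : StrictMono j)
    (d : ∀ k, B (j k) →* A (i k)) (u : ∀ k, A (i (k + 1)) →* B (j k)),
    (∀ k, (d k).comp (u k) = bondingComp a (i k) (i (k + 1)) (hi (Nat.lt_succ_self k)).le) ∧
    (∀ k, (u k).comp (d (k + 1)) = bondingComp b (j k) (j (k + 1)) (hj (Nat.lt_succ_self k)).le)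

/-- An inverse sequence of groups is *semistable* if it is pro-isomorphic to an
inverse sequence all of whose bonding homomorphisms are surjective. -/
def Semistable (G : ℕ → Type u) [∀ n, Group (G n)] (g : ∀ n, G (n + 1) →* G n) : Prop :=
  ∃ (B : ℕ → Type u) (instB : ∀ n, Group (B n)),
    letI := instB
    ∃ b : ∀ n, B (n + 1) →* B n,
      (∀ n, Function.Surjective (b n)) ∧ ProIsomorphic G g B b

/-- An inverse sequence of groups is *pro-monomorphic* if it is pro-isomorphic
to an inverse sequence all of whose bonding homomorphisms are injective. -/
def ProMonomorphic (G : ℕ → Type u) [∀ n, Group (G n)] (g : ∀ n, G (n + 1) →* G n) : Prop :=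
  ∃ (B : ℕ → Type u) (instB : ∀ n, Group (B n)),
    letI := instB
    ∃ b : ∀ n, B (n + 1) →* B n,
      (∀ n, Function.Injective (b n)) ∧ ProIsomorphic G g B b

/-- An inverse sequence of groups is *stable* if it is pro-isomorphic to a
constant inverse sequence `C ← C ← C ← ⋯` in which every bonding map is the
identity homomorphism of a fixed group `C`. -/
def Stable (G : ℕ → Type u) [∀ n, Group (G n)] (g : ∀ n, G (n + 1) →* G n) : Prop :=
  ∃ (C : Type u) (inst : Group C),
    letI := inst
    ProIsomorphic G g (fun _ => C) (fun _ => MonoidHom.id C)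

/-! Pro-isomorphism is an equivalence relation, so the sequence `A` with surjective bonding maps
and the sequence `B` with injective bonding maps that represent `G` are pro-isomorphic to each
other. In a ladder `d, u` between them, `d ∘ u` is a composite of surjections and `u ∘ d` one of
injections. Hence every `d` is onto, and every `d (k + 1)` and every `u` is one-to-one, so the
rungs `d (k + 1) ∘ u (k + 1)` are composite bonding maps of `A` that are isomorphisms: `A`,
and with it `G`, is pro-isomorphic to the constant sequence on `A (i 1)`. -/

section BondingComp

variable {G : ℕ → Type*} [∀ n, Group (G n)] (g : ∀ n, G (n + 1) →* G n)

theorem bondingComp_self (m : ℕ) (h : m ≤ m) : bondingComp g m m h = MonoidHom.id (G m) :=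
  Nat.leRecOn_self _

theorem bondingComp_succ {m n : ℕ} (h : m ≤ n) (h' : m ≤ n + 1) :
    bondingComp g m (n + 1) h' = (bondingComp g m n h).comp (g n) :=
  Nat.leRecOn_succ h _

theorem bondingComp_apply_bondingComp {m n p : ℕ} (hmn : m ≤ n) (hnp : n ≤ p) (x : G p) :
    bondingComp g m n hmn (bondingComp g n p hnp x) = bondingComp g m p (hmn.trans hnp) x := by
  induction p, hnp using Nat.le_induction with
  | base => rw [bondingComp_self, MonoidHom.id_apply]
  | succ p hnp ih =>
    rw [bondingComp_succ g hnp, bondingComp_succ g (hmn.trans hnp), MonoidHom.comp_apply,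
      MonoidHom.comp_apply, ih]

theorem bondingComp_surjective (hg : ∀ n, Function.Surjective (g n)) {m n : ℕ} (h : m ≤ n) :
    Function.Surjective (bondingComp g m n h) := by
  induction n, h using Nat.le_induction with
  | base => rw [bondingComp_self]; exact Function.surjective_id
  | succ n h ih => rw [bondingComp_succ g h, MonoidHom.coe_comp]; exact ih.comp (hg n)

theorem bondingComp_injective (hg : ∀ n, Function.Injective (g n)) {m n : ℕ} (h : m ≤ n) :
    Function.Injective (bondingComp g m n h) := by
  induction n, h using Nat.le_induction with
  | base => rw [bondingComp_self]; exact Function.injective_id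
  | succ n h ih => rw [bondingComp_succ g h, MonoidHom.coe_comp]; exact ih.comp (hg n)

theorem bondingComp_bijective_of_bijective {i : ℕ → ℕ} (hi : StrictMono i)
    (hg : ∀ k, Function.Bijective (bondingComp g (i k) (i (k + 1)) (hi k.lt_succ_self).le))
    (t : ℕ) : Function.Bijective (bondingComp g (i 0) (i t) (hi.monotone t.zero_le)) := by
  induction t with
  | zero => rw [bondingComp_self]; exact Function.bijective_id
  | succ t ih =>
    have hcomp : bondingComp g (i 0) (i (t + 1)) (hi.monotone (t + 1).zero_le) =
        (bondingComp g (i 0) (i t) (hi.monotone t.zero_le)).comp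
          (bondingComp g (i t) (i (t + 1)) (hi t.lt_succ_self).le) := by
      ext x
      exact (bondingComp_apply_bondingComp g _ _ x).symm
    rw [hcomp, MonoidHom.coe_comp]
    exact ih.comp (hg t)

end BondingComp

theorem bondingComp_const_id (C : Type*) [Group C] (m n : ℕ) (h : m ≤ n) :
    bondingComp (G := fun _ => C) (fun _ => MonoidHom.id C) m n h = MonoidHom.id C := by
  induction n, h using Nat.le_induction with
  | base => exact bondingComp_self _ m le_rfl
  | succ n h ih => rw [bondingComp_succ _ h, ih, MonoidHom.id_comp]

structure ProIsomorphism (A : ℕ → Type*) [∀ n, Group (A n)] (a : ∀ n, A (n + 1) →* A n)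
    (B : ℕ → Type*) [∀ n, Group (B n)] (b : ∀ n, B (n + 1) →* B n) where
  i : ℕ → ℕ
  j : ℕ → ℕ
  strictMono_i : StrictMono i
  strictMono_j : StrictMono j
  d : ∀ k, B (j k) →* A (i k)
  u : ∀ k, A (i (k + 1)) →* B (j k)
  d_comp_u : ∀ k,
    (d k).comp (u k) = bondingComp a (i k) (i (k + 1)) (strictMono_i k.lt_succ_self).le
  u_comp_d : ∀ k,
    (u k).comp (d (k + 1)) = bondingComp b (j k) (j (k + 1)) (strictMono_j k.lt_succ_self).le

section ProIsomorphism

variable {A : ℕ → Type*} [∀ n, Group (A n)] {a : ∀ n, A (n + 1) →* A n}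
  {G : ℕ → Type*} [∀ n, Group (G n)] {g : ∀ n, G (n + 1) →* G n}
  {B : ℕ → Type*} [∀ n, Group (B n)] {b : ∀ n, B (n + 1) →* B n}

theorem proIsomorphic_iff_nonempty :
    ProIsomorphic A a B b ↔ Nonempty (ProIsomorphism A a B b) :=
  ⟨fun ⟨i, j, hi, hj, d, u, hdu, hud⟩ => ⟨⟨i, j, hi, hj, d, u, hdu, hud⟩⟩,
    fun ⟨I⟩ => ⟨I.i, I.j, I.strictMono_i, I.strictMono_j, I.d, I.u, I.d_comp_u, I.u_comp_d⟩⟩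

namespace ProIsomorphism

section Ladder

variable (I : ProIsomorphism A a B b)

theorem d_u_apply (k : ℕ) (x : A (I.i (k + 1))) :
    I.d k (I.u k x) =
      bondingComp a (I.i k) (I.i (k + 1)) (I.strictMono_i k.lt_succ_self).le x :=
  DFunLike.congr_fun (I.d_comp_u k) x

theorem u_d_apply (k : ℕ) (y : B (I.j (k + 1))) :
    I.u k (I.d (k + 1) y) =
      bondingComp b (I.j k) (I.j (k + 1)) (I.strictMono_j k.lt_succ_self).le y :=
  DFunLike.congr_fun (I.u_comp_d k) y

def symm : ProIsomorphism B b A a where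
  i := I.j
  j k := I.i (k + 1)
  strictMono_i := I.strictMono_j
  strictMono_j := I.strictMono_i.comp fun _ _ h => Nat.succ_lt_succ h
  d := I.u
  u k := I.d (k + 1)
  d_comp_u := I.u_comp_d
  u_comp_d k := I.d_comp_u (k + 1)

theorem d_bondingComp_u_apply {k k' : ℕ} (h : k ≤ k') (x : A (I.i (k' + 1))) :
    I.d k (bondingComp b (I.j k) (I.j k') (I.strictMono_j.monotone h) (I.u k' x)) =
      bondingComp a (I.i k) (I.i (k' + 1)) (I.strictMono_i.monotone (by omega)) x := by
  induction k', h using Nat.le_induction with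
  | base => rw [bondingComp_self, MonoidHom.id_apply, d_u_apply]
  | succ k' h ih =>
    rw [← bondingComp_apply_bondingComp b (I.strictMono_j.monotone h)
        (I.strictMono_j k'.lt_succ_self).le, ← u_d_apply, d_u_apply, ih,
      bondingComp_apply_bondingComp]

theorem u_bondingComp_d_apply {k k' : ℕ} (h : k < k') (y : B (I.j k')) :
    I.u k (bondingComp a (I.i (k + 1)) (I.i k') (I.strictMono_i.monotone h) (I.d k' y)) =
      bondingComp b (I.j k) (I.j k') (I.strictMono_j.monotone h.le) y := by
  obtain ⟨n, rfl⟩ := Nat.exists_eq_add_of_lt h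
  exact I.symm.d_bondingComp_u_apply (Nat.le_add_right k n) y

theorem d_surjective (ha : ∀ n, Function.Surjective (a n)) (k : ℕ) :
    Function.Surjective (I.d k) := by
  have h := bondingComp_surjective a ha (I.strictMono_i k.lt_succ_self).le
  rw [← I.d_comp_u, MonoidHom.coe_comp] at h
  exact h.of_comp

theorem d_succ_injective (hb : ∀ n, Function.Injective (b n)) (k : ℕ) :
    Function.Injective (I.d (k + 1)) := by
  have h := bondingComp_injective b hb (I.strictMono_j k.lt_succ_self).le
  rw [← I.u_comp_d, MonoidHom.coe_comp] at h
  exact h.of_comp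

theorem u_injective (ha : ∀ n, Function.Surjective (a n)) (hb : ∀ n, Function.Injective (b n))
    (k : ℕ) : Function.Injective (I.u k) := by
  have h := bondingComp_injective b hb (I.strictMono_j k.lt_succ_self).le
  rw [← I.u_comp_d, MonoidHom.coe_comp] at h
  exact h.of_comp_right (I.d_surjective ha (k + 1))

theorem bondingComp_bijective (ha : ∀ n, Function.Surjective (a n))
    (hb : ∀ n, Function.Injective (b n)) (k : ℕ) :
    Function.Bijective (bondingComp a (I.i (k + 1)) (I.i (k + 1 + 1))
      (I.strictMono_i (k + 1).lt_succ_self).le) := by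
  refine ⟨?_, bondingComp_surjective a ha _⟩
  rw [← I.d_comp_u, MonoidHom.coe_comp]
  exact (I.d_succ_injective hb k).comp (I.u_injective ha hb (k + 1))

end Ladder

/-- The `A`-indices `r t` of the composite ladder. Stepping to `J.i (I.j (r t) + 1) + 1` puts the
`G`-index reached by `I.u` beyond the source `G (J.i (I.j (r t) + 1))` of `J.u (I.j (r t))`, so
the two ladders can be joined by bonding maps of `G`. It is reducible so that the rung `u t` of
`trans`, built from `I.u (J.i (I.j (r t) + 1))`, is seen to start at `A (I.i (r (t + 1)))`. -/
@[reducible]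
def transIndex (I : ProIsomorphism A a G g) (J : ProIsomorphism G g B b) : ℕ → ℕ
  | 0 => 0
  | t + 1 => J.i (I.j (transIndex I J t) + 1) + 1

theorem strictMono_transIndex (I : ProIsomorphism A a G g) (J : ProIsomorphism G g B b) :
    StrictMono (transIndex I J) := by
  refine strictMono_nat_of_lt_succ fun t => ?_
  have h₁ : transIndex I J t ≤ I.j (transIndex I J t) := I.strictMono_j.le_apply
  have h₂ : I.j (transIndex I J t) + 1 ≤ J.i (I.j (transIndex I J t) + 1) :=
    J.strictMono_i.le_apply
  change transIndex I J t < J.i (I.j (transIndex I J t) + 1) + 1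
  omega

def trans (I : ProIsomorphism A a G g) (J : ProIsomorphism G g B b) :
    ProIsomorphism A a B b where
  i t := I.i (transIndex I J t)
  j t := J.j (I.j (transIndex I J t))
  strictMono_i := I.strictMono_i.comp (strictMono_transIndex I J)
  strictMono_j := J.strictMono_j.comp (I.strictMono_j.comp (strictMono_transIndex I J))
  d t := (I.d _).comp ((bondingComp g _ _ J.strictMono_i.le_apply).comp (J.d _))
  u t := (J.u _).comp ((bondingComp g _ _ I.strictMono_j.le_apply).comp
    (I.u (J.i (I.j (transIndex I J t) + 1))))
  d_comp_u t := by
    ext x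
    simp only [MonoidHom.comp_apply]
    rw [J.d_u_apply, bondingComp_apply_bondingComp, bondingComp_apply_bondingComp]
    exact I.d_bondingComp_u_apply
      (Nat.le_of_lt_succ (strictMono_transIndex I J t.lt_succ_self)) x
  u_comp_d t := by
    ext y
    simp only [MonoidHom.comp_apply]
    rw [I.u_d_apply, bondingComp_apply_bondingComp, bondingComp_apply_bondingComp]
    exact J.u_bondingComp_d_apply (I.strictMono_j (strictMono_transIndex I J t.lt_succ_self)) y

end ProIsomorphism

theorem ProIsomorphic.symm (h : ProIsomorphic A a B b) : ProIsomorphic B b A a :=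
  let ⟨I⟩ := proIsomorphic_iff_nonempty.1 h
  proIsomorphic_iff_nonempty.2 ⟨I.symm⟩

theorem ProIsomorphic.trans (h₁ : ProIsomorphic A a G g) (h₂ : ProIsomorphic G g B b) :
    ProIsomorphic A a B b :=
  let ⟨I⟩ := proIsomorphic_iff_nonempty.1 h₁
  let ⟨J⟩ := proIsomorphic_iff_nonempty.1 h₂
  proIsomorphic_iff_nonempty.2 ⟨I.trans J⟩

end ProIsomorphism

theorem proIsomorphic_const_of_bondingComp_bijective {A : ℕ → Type*} [∀ n, Group (A n)]
    (a : ∀ n, A (n + 1) →* A n) {i : ℕ → ℕ} (hi : StrictMono i)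
    (ha : ∀ k, Function.Bijective (bondingComp a (i k) (i (k + 1)) (hi k.lt_succ_self).le)) :
    ProIsomorphic A a (fun _ => A (i 0)) (fun _ => MonoidHom.id (A (i 0))) := by
  let E t : A (i t) ≃* A (i 0) :=
    MulEquiv.ofBijective _ (bondingComp_bijective_of_bijective a hi ha t)
  refine ⟨i, id, hi, strictMono_id, fun t => (E t).symm.toMonoidHom,
    fun t => bondingComp a (i 0) (i (t + 1)) (hi.monotone (t + 1).zero_le),
    fun t => ?_, fun t => ?_⟩
  · ext x
    rw [MonoidHom.comp_apply, ← bondingComp_apply_bondingComp a (hi.monotone t.zero_le)]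
    exact (E t).symm_apply_apply _
  · ext c
    rw [bondingComp_const_id]
    exact (E (t + 1)).apply_symm_apply c

/-- An inverse sequence of groups that is both semistable and pro-monomorphic
is stable. -/
theorem stable_of_semistable_of_proMonomorphic {G : ℕ → Type u} [∀ n, Group (G n)]
    (g : ∀ n, G (n + 1) →* G n)
    (hss : Semistable G g) (hpm : ProMonomorphic G g) :
    Stable G g := by
  obtain ⟨A, _, a, ha, hGA⟩ := hss
  obtain ⟨B, _, b, hb, hGB⟩ := hpm
  obtain ⟨I⟩ := proIsomorphic_iff_nonempty.1 (hGA.symm.trans hGB)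
  exact ⟨_, _, hGA.trans (proIsomorphic_const_of_bondingComp_bijective a
    (I.strictMono_i.comp fun _ _ h => Nat.succ_lt_succ h) (I.bondingComp_bijective ha hb))⟩
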